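/- Let t, θ > 0 and z ≥ 0, and let μ be the Gaussian measure on ℝ with mean 0 and variance t. Then ∫_ℝ ( 1_{[0,z)}(|w|) + e^{−2θ(|w| − z)} · 1_{[z,∞)}(|w|) ) μ(dw) = 2 Φ(z/√t) − 1 + 2 e^{2θ(z + θ t)} Φ(−2θ√t − z/√t). -/

import Mathlib

open MeasureTheory ProbabilityTheory

/-- The standard normal cumulative distribution function. -/
noncomputable def stdNormalCdf (x : ℝ) : ℝ :=
  (Real.sqrt (2 * Real.pi))⁻¹ * ∫ u in Set.Iic x, Real.exp (-u^2 / 2)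

/-!
The integrand depends only on `|w|`, so by symmetry of the centred Gaussian the integral is twice
the integral over `[0, ∞)` against the density. On `[0, z)` the integrand is `1`, which gives
`Φ(z/√t) - 1/2`. On `[z, ∞)` completing the square turns the density of `N(0, t)` times
`e^{-2θ(w - z)}` into `e^{2θ(z + θt)}` times the density of `N(-2θt, t)`, whose mass on `[z, ∞)`
is `Φ((-2θt - z)/√t)`.
-/

open Set Real
open scoped NNReal

lemma setIntegral_gaussianPDFReal (μ : ℝ) {v : ℝ≥0} (hv : v ≠ 0) (s : Set ℝ) :
    ∫ x in s, gaussianPDFReal μ v x = (gaussianReal μ v).real s := by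
  rw [measureReal_def, gaussianReal_apply_eq_integral μ hv,
    ENNReal.toReal_ofReal (integral_nonneg (gaussianPDFReal_nonneg μ v))]

lemma stdNormalCdf_eq_measureReal (x : ℝ) :
    stdNormalCdf x = (gaussianReal 0 1).real (Iic x) := by
  rw [← setIntegral_gaussianPDFReal 0 one_ne_zero, stdNormalCdf, ← integral_const_mul]
  simp [gaussianPDFReal]

lemma gaussianReal_map_standardize (μ : ℝ) {v : ℝ≥0} (hv : v ≠ 0) :
    (gaussianReal μ v).map (fun x ↦ (μ - x) / √v) = gaussianReal 0 1 := by
  have hcomp : (fun x ↦ (μ - x) / √v) = (· / √v) ∘ (μ - ·) := rfl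
  rw [hcomp, ← Measure.map_map (by fun_prop) (by fun_prop), gaussianReal_map_const_sub,
    gaussianReal_map_div_const, sub_self, zero_div]
  congr
  ext
  simp [Real.sq_sqrt v.coe_nonneg, hv]

lemma measureReal_gaussianReal_Ici (μ : ℝ) {v : ℝ≥0} (hv : v ≠ 0) (a : ℝ) :
    (gaussianReal μ v).real (Ici a) = stdNormalCdf ((μ - a) / √v) := by
  have hsqrt : 0 < √(v : ℝ) := sqrt_pos.2 (by positivity)
  rw [stdNormalCdf_eq_measureReal, ← gaussianReal_map_standardize μ hv,
    map_measureReal_apply (by fun_prop) measurableSet_Iic]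
  congr
  ext x
  simp only [mem_Ici, mem_preimage, mem_Iic, div_le_div_iff_of_pos_right hsqrt]
  constructor <;> intro <;> linarith

lemma stdNormalCdf_neg (x : ℝ) : stdNormalCdf (-x) = 1 - stdNormalCdf x := by
  have : NullSingletonClass (gaussianReal 0 1) := nullSingletonClass_gaussianReal one_ne_zero
  have hIci : (gaussianReal 0 1).real (Ici x) = stdNormalCdf (-x) := by
    simpa using measureReal_gaussianReal_Ici 0 one_ne_zero x
  rw [← hIci, stdNormalCdf_eq_measureReal,
    ← measureReal_congr (Iio_ae_eq_Iic (μ := gaussianReal 0 1)), ← compl_Ici,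
    measureReal_compl measurableSet_Ici, probReal_univ]
  ring

lemma setIntegral_Ico_gaussianPDFReal (μ : ℝ) {v : ℝ≥0} (hv : v ≠ 0) {a b : ℝ} (hab : a ≤ b) :
    ∫ x in Ico a b, gaussianPDFReal μ v x
      = stdNormalCdf ((μ - a) / √v) - stdNormalCdf ((μ - b) / √v) := by
  rw [setIntegral_gaussianPDFReal μ hv, ← measureReal_gaussianReal_Ici μ hv,
    ← measureReal_gaussianReal_Ici μ hv, ← measureReal_sdiff (Ici_subset_Ici.2 hab)
    measurableSet_Ici, Ici_sdiff_Ici]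

lemma stdNormalCdf_zero : stdNormalCdf 0 = 1 / 2 := by
  linarith [neg_zero (G := ℝ) ▸ stdNormalCdf_neg 0]

lemma setIntegral_Ico_zero_gaussianPDFReal {v : ℝ≥0} (hv : v ≠ 0) {a : ℝ} (ha : 0 ≤ a) :
    ∫ x in Ico 0 a, gaussianPDFReal 0 v x = stdNormalCdf (a / √v) - 1 / 2 := by
  rw [setIntegral_Ico_gaussianPDFReal 0 hv ha, sub_self, zero_div, stdNormalCdf_zero, zero_sub,
    neg_div, stdNormalCdf_neg]
  ring

lemma gaussianPDFReal_mul_exp (μ : ℝ) (v : ℝ≥0) (b c x : ℝ) :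
    gaussianPDFReal μ v x * exp (c * (x - b))
      = exp (c * (μ - b) + c ^ 2 * v / 2) * gaussianPDFReal (μ + c * v) v x := by
  rcases eq_or_ne v 0 with rfl | hv
  · simp
  have hv' : (v : ℝ) ≠ 0 := by exact_mod_cast hv
  simp only [gaussianPDFReal]
  rw [mul_left_comm, mul_assoc, ← exp_add, ← exp_add]
  congr 2
  field_simp
  ring

lemma integrable_gaussianPDFReal_mul_exp (μ : ℝ) (v : ℝ≥0) (b c : ℝ) :
    Integrable (fun x ↦ gaussianPDFReal μ v x * exp (c * (x - b))) := by
  simp_rw [gaussianPDFReal_mul_exp]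
  exact (integrable_gaussianPDFReal _ v).const_mul _

lemma setIntegral_Ici_gaussianPDFReal_mul_exp (μ : ℝ) {v : ℝ≥0} (hv : v ≠ 0) (a b c : ℝ) :
    ∫ x in Ici a, gaussianPDFReal μ v x * exp (c * (x - b))
      = exp (c * (μ - b) + c ^ 2 * v / 2) * stdNormalCdf ((μ + c * v - a) / √v) := by
  simp_rw [gaussianPDFReal_mul_exp, integral_const_mul, setIntegral_gaussianPDFReal _ hv,
    measureReal_gaussianReal_Ici _ hv]

lemma integral_gaussianReal_comp_abs {v : ℝ≥0} (hv : v ≠ 0) (f : ℝ → ℝ) :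
    ∫ x, f |x| ∂gaussianReal 0 v = 2 * ∫ x in Ici 0, gaussianPDFReal 0 v x * f x := by
  have hsymm (x : ℝ) : gaussianPDFReal 0 v x * f |x| = gaussianPDFReal 0 v |x| * f |x| := by
    simp [gaussianPDFReal]
  simp_rw [integral_gaussianReal_eq_integral_smul hv, smul_eq_mul, hsymm]
  rw [integral_comp_abs (f := fun y ↦ gaussianPDFReal 0 v y * f y), integral_Ici_eq_integral_Ioi]

theorem slowly_reflected_bm_cdf_general (t θ z : ℝ) (ht : 0 < t) (hz : 0 ≤ z) :
    ∫ w, (if |w| < z then (1 : ℝ) else Real.exp (-2 * θ * (|w| - z)))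
        ∂(gaussianReal 0 t.toNNReal)
      = 2 * stdNormalCdf (z / Real.sqrt t) - 1
        + 2 * Real.exp (2 * θ * (z + θ * t)) *
          stdNormalCdf (-2 * θ * Real.sqrt t - z / Real.sqrt t) := by
  have hv : t.toNNReal ≠ 0 := by simpa using ht
  set p := gaussianPDFReal 0 t.toNNReal
  set f : ℝ → ℝ := fun y ↦ if y < z then 1 else exp (-2 * θ * (y - z))
  have hf_near : EqOn (fun x ↦ p x * f x) p (Ico 0 z) := fun x hx ↦ by simp [f, hx.2]
  have hf_far : EqOn (fun x ↦ p x * f x) (fun x ↦ p x * exp (-2 * θ * (x - z))) (Ici z) :=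
    fun x hx ↦ by simp [f, not_lt.2 (mem_Ici.1 hx)]
  have h_far : ∫ x in Ici z, p x * f x
      = exp (2 * θ * (z + θ * t)) * stdNormalCdf (-2 * θ * √t - z / √t) := by
    rw [setIntegral_congr_fun measurableSet_Ici hf_far,
      setIntegral_Ici_gaussianPDFReal_mul_exp 0 hv, Real.coe_toNNReal t ht.le]
    congr 2
    · ring
    · field_simp
      rw [sq_sqrt ht.le]
      ring
  calc _ = 2 * ∫ x in Ici 0, p x * f x := integral_gaussianReal_comp_abs hv f
    _ = 2 * ((∫ x in Ico 0 z, p x * f x) + ∫ x in Ici z, p x * f x) := by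
      rw [← Ico_union_Ici_eq_Ici hz, setIntegral_union
        ((Iio_disjoint_Ici le_rfl).mono_left Ico_subset_Iio_self) measurableSet_Ici
        ((integrable_gaussianPDFReal 0 _).integrableOn.congr_fun hf_near.symm measurableSet_Ico)
        ((integrable_gaussianPDFReal_mul_exp 0 _ _ _).integrableOn.congr_fun hf_far.symm
          measurableSet_Ici)]
    _ = _ := by
      rw [setIntegral_congr_fun measurableSet_Ico hf_near,
        setIntegral_Ico_zero_gaussianPDFReal hv hz, Real.coe_toNNReal t ht.le, h_far]
      ring

theorem slowly_reflected_bm_cdf (t θ z : ℝ) (ht : 0 < t) (hθ : 0 < θ) (hz : 0 ≤ z) :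
    ∫ w, (if |w| < z then (1 : ℝ) else Real.exp (-2 * θ * (|w| - z)))
        ∂(gaussianReal 0 t.toNNReal)
      = 2 * stdNormalCdf (z / Real.sqrt t) - 1
        + 2 * Real.exp (2 * θ * (z + θ * t)) *
          stdNormalCdf (-2 * θ * Real.sqrt t - z / Real.sqrt t) :=
  slowly_reflected_bm_cdf_general t θ z ht hz
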